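/- Let G = UΣVᵀ be a real m×n matrix with polar factor P = UVᵀ and let α > ‖G‖_2 be finite. Then U Σ^{1/p} Vᵀ = α^{1/p} · Σ_{i=0}^∞ binom(1/p, i) ((1/α) G Pᵀ − I)^i · P, where the series converges, and binom(1/p, i) is the generalized binomial coefficient. -/

import Mathlib

/-!
With `x = σ/α - 1 ∈ (-1, 0)`, the matrix `E = (1/α) G Pᵀ - 1` acts on every matrix of the form
`U D Vᵀ` (`D` diagonal) by multiplying `D` with `diagonal x`, so `E^i P = U x^i Vᵀ`. The series
is therefore `U (∑ binom(1/p, i) x^i) Vᵀ`, and the scalar binomial series (convergent since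
`|x| < 1`) sums the diagonal to `(1 + x)^{1/p} = (σ/α)^{1/p}`.
-/

open Matrix

/-- Generalized binomial coefficient `binom(q, i) = q(q−1)⋯(q−i+1)/i!`. -/
noncomputable def gbinom (q : ℝ) (i : ℕ) : ℝ :=
  (∏ j ∈ Finset.range i, (q - (j : ℝ))) / (Nat.factorial i : ℝ)

theorem gbinom_eq_ringChoose (q : ℝ) (i : ℕ) : gbinom q i = Ring.choose q i := by
  rw [Ring.choose_eq_smul, gbinom, ← descPochhammer_eval_eq_prod_range, smul_eq_mul,
    ← Polynomial.aeval_eq_smeval, Polynomial.aeval_def, Polynomial.eval₂_eq_eval_map,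
    descPochhammer_map, inv_mul_eq_div]

theorem hasSum_gbinom_mul_pow (q : ℝ) {x : ℝ} (hx : |x| < 1) :
    HasSum (fun i => gbinom q i * x ^ i) ((1 + x) ^ q) := by
  have := (Real.one_add_rpow_hasFPowerSeriesOnBall_zero (a := q)).hasSum (y := x)
    (by simpa [Metric.mem_eball, edist_dist] using hx)
  simpa [binomialSeries, gbinom_eq_ringChoose, mul_comm] using this

section

variable {l m n o R : Type*} [Fintype n] [DecidableEq n]

theorem HasSum.matrix_mul_diagonal_mul [Fintype m] [Semiring R] [TopologicalSpace R]
    [IsTopologicalSemiring R] {ι : Type*} {f : ι → n → R} {a : n → R} (hf : HasSum f a)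
    (U : Matrix m n R) (W : Matrix n o R) :
    HasSum (fun i => U * diagonal (f i) * W) (U * diagonal a * W) :=
  (hf.matrix_diagonal.map (addMonoidHomMulLeft U) (continuous_const.matrix_mul continuous_id)).map
    (addMonoidHomMulRight W) (continuous_id.matrix_mul continuous_const)

variable [CommRing R]

theorem Matrix.mul_diagonal_mul_transpose_mul_mul_diagonal_mul [Fintype m] {U : Matrix m n R}
    (hU : Uᵀ * U = 1) (a b : n → R) (W : Matrix n o R) :
    U * diagonal a * Uᵀ * (U * diagonal b * W) = U * diagonal (a * b) * W := by
  rw [show diagonal (a * b) = diagonal a * diagonal b from (diagonal_mul_diagonal a b).symm]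
  simp only [Matrix.mul_assoc]
  rw [← Matrix.mul_assoc Uᵀ U, hU, Matrix.one_mul]

-- For non-square `U` the left factor is not `U (c • σ - 1) Uᵀ`, since `U Uᵀ ≠ 1`; it only acts
-- like it on matrices `U D Vᵀ`.
theorem Matrix.smul_mul_transpose_polar_sub_one_mul [Fintype l] [DecidableEq l] [Fintype m]
    {U : Matrix l n R} {V : Matrix m n R} (hU : Uᵀ * U = 1) (hV : Vᵀ * V = 1) (σ d : n → R) (c : R) :
    (c • (U * diagonal σ * Vᵀ * (U * Vᵀ)ᵀ) - 1) * (U * diagonal d * Vᵀ) =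
      U * diagonal ((c • σ - 1) * d) * Vᵀ := by
  have hGP : U * diagonal σ * Vᵀ * (U * Vᵀ)ᵀ = U * diagonal σ * Uᵀ := by
    rw [transpose_mul, transpose_transpose, Matrix.mul_assoc _ Vᵀ, ← Matrix.mul_assoc Vᵀ, hV,
      Matrix.one_mul]
  rw [hGP, Matrix.sub_mul, Matrix.one_mul, Matrix.smul_mul,
    mul_diagonal_mul_transpose_mul_mul_diagonal_mul hU, sub_mul, one_mul, smul_mul_assoc,
    ← Matrix.smul_mul, ← Matrix.mul_smul, ← diagonal_smul, ← Matrix.sub_mul, ← Matrix.mul_sub,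
    diagonal_sub]
  rfl

theorem Matrix.pow_mul_mul_diagonal_mul [Fintype l] [DecidableEq l] {A : Matrix l l R}
    {U : Matrix l n R} {W : Matrix n o R} {x : n → R}
    (hA : ∀ d, A * (U * diagonal d * W) = U * diagonal (x * d) * W) (i : ℕ) (d : n → R) :
    A ^ i * (U * diagonal d * W) = U * diagonal (x ^ i * d) * W := by
  induction i generalizing d with
  | zero => simp
  | succ i ih => rw [pow_succ, Matrix.mul_assoc, hA, ih, pow_succ, mul_assoc]

end

theorem stmt8_general {m n r : ℕ} (p : ℝ)
    (G : Matrix (Fin m) (Fin n) ℝ) (U : Matrix (Fin m) (Fin r) ℝ)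
    (V : Matrix (Fin n) (Fin r) ℝ) (σ : Fin r → ℝ)
    (hσ : ∀ i, 0 < σ i) (hU : Uᵀ * U = 1) (hV : Vᵀ * V = 1)
    (hG : G = U * Matrix.diagonal σ * Vᵀ)
    (α : ℝ) (hα0 : 0 < α) (hα : ∀ i, σ i < α) :
    let P := U * Vᵀ
    ∃ S : Matrix (Fin m) (Fin n) ℝ,
      HasSum (fun i : ℕ => gbinom (1 / p) i • ((((1 / α) • (G * Pᵀ)) - 1) ^ i * P)) S ∧
      U * Matrix.diagonal (fun i => σ i ^ (1 / p)) * Vᵀ = α ^ (1 / p) • S := by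
  intro P
  set x : Fin r → ℝ := (1 / α) • σ - 1
  have hx1 : ∀ j, 1 + x j = σ j / α := fun j => by simp [x, div_eq_inv_mul]
  have hx : ∀ j, |x j| < 1 := fun j => by
    have := div_pos (hσ j) hα0
    have := (div_lt_one hα0).2 (hα j)
    rw [abs_lt]; constructor <;> linarith [hx1 j]
  have hEP : ∀ i : ℕ, ((1 / α) • (G * Pᵀ) - 1) ^ i * P = U * diagonal (x ^ i) * Vᵀ := fun i => by
    simpa only [diagonal_one', Matrix.mul_one, mul_one, ← hG] using
      pow_mul_mul_diagonal_mul (smul_mul_transpose_polar_sub_one_mul hU hV σ · (1 / α)) i 1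
  refine ⟨U * diagonal (fun j => (1 + x j) ^ (1 / p)) * Vᵀ, ?_, ?_⟩
  · have hsum := (Pi.hasSum (f := fun i => gbinom (1 / p) i • x ^ i)).2
      fun j => hasSum_gbinom_mul_pow (1 / p) (hx j)
    simpa only [hEP, diagonal_smul, Matrix.smul_mul, Matrix.mul_smul] using
      hsum.matrix_mul_diagonal_mul U Vᵀ
  · rw [← Matrix.smul_mul, ← Matrix.mul_smul, ← diagonal_smul]
    congr 3
    funext j
    rw [Pi.smul_apply, smul_eq_mul, hx1, Real.div_rpow (hσ j).le hα0.le,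
      mul_div_cancel₀ _ (Real.rpow_pos_of_pos hα0 _).ne']

/-- Convergent binomial series for the fractional map: with `P = UVᵀ` the polar factor of
`G = UΣVᵀ` and `α > ‖G‖₂`,
`U Σ^{1/p} Vᵀ = α^{1/p} ∑ᵢ binom(1/p, i) ((1/α) G Pᵀ − I)^i P`. -/
theorem stmt8 {m n r : ℕ} (p : ℝ) (hp : 1 ≤ p)
    (G : Matrix (Fin m) (Fin n) ℝ) (U : Matrix (Fin m) (Fin r) ℝ)
    (V : Matrix (Fin n) (Fin r) ℝ) (σ : Fin r → ℝ)
    (hσ : ∀ i, 0 < σ i) (hU : Uᵀ * U = 1) (hV : Vᵀ * V = 1)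
    (hG : G = U * Matrix.diagonal σ * Vᵀ)
    (α : ℝ) (hα0 : 0 < α) (hα : ∀ i, σ i < α) :
    let P := U * Vᵀ
    ∃ S : Matrix (Fin m) (Fin n) ℝ,
      HasSum (fun i : ℕ => gbinom (1 / p) i • ((((1 / α) • (G * Pᵀ)) - 1) ^ i * P)) S ∧
      U * Matrix.diagonal (fun i => σ i ^ (1 / p)) * Vᵀ = α ^ (1 / p) • S :=
  stmt8_general p G U V σ hσ hU hV hG α hα0 hα
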